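/- Let C be a finite set of candidates, PW = {pw_1,…,pw_l} ⊆ C a nonempty set of possible winners, and P a preference order on C with P(pw_a,pw_b) if and only if a < b. A preference order P' on C locally dominates P (given PW) if and only if all three of the following hold: (i) P'(pw_a,pw_{a+1}) for all a ∈ {1,…,l−1}, i.e. the order of possible winners does not change; (ii) |[pw_a, P', pw_{a+1}]| ≥ |[pw_a, P, pw_{a+1}]| for all a ∈ {1,…,l−1}, i.e. no segment between two consecutive possible winners decreases; and (iii) there exists a ∈ {1,…,l−1} with |[pw_a, P', pw_{a+1}]| > |[pw_a, P, pw_{a+1}]|, i.e. at least one segment between two consecutive possible winners strictly grows. -/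

import Mathlib

/-- A preference order: a strict total order on candidates. -/
def IsPref {C : Type*} (P : C → C → Prop) : Prop :=
  (∀ a b : C, a ≠ b → P a b ∨ P b a) ∧ (∀ a : C, ¬ P a a) ∧
    ∀ a b c : C, P a b → P b c → P a c

/-- The Borda score that preference order `P` gives candidate `c`. -/
noncomputable def borda {C : Type*} [Fintype C] (P : C → C → Prop) (c : C) : ℕ :=
  1 + Set.ncard {c' : C | P c c'}

/-- `c` is the outcome `F(s, P)`: it beats every other candidate either in total score
`s + borda`, or on equal total score by the tie-breaking order `tb`. -/
def IsWinner {C : Type*} [Fintype C] (tb : C → C → Prop) (s : C → ℕ)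
    (P : C → C → Prop) (c : C) : Prop :=
  ∀ c' : C, c' ≠ c →
    s c' + borda P c' < s c + borda P c ∨
      (s c' + borda P c' = s c + borda P c ∧ tb c c')

/-- `s` is a possible world for the set `PW` of possible winners. -/
def PossibleWorld {C : Type*} [Fintype C] (tb : C → C → Prop) (PW : Set C)
    (s : C → ℕ) : Prop :=
  ∀ R : C → C → Prop, IsPref R → ∀ c : C, IsWinner tb s R c → c ∈ PW

/-- `P'` locally dominates `P` given the possible-winner set `PW`. -/
def LocDom {C : Type*} [Fintype C] (tb : C → C → Prop) (PW : Set C)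
    (P' P : C → C → Prop) : Prop :=
  (∀ s : C → ℕ, PossibleWorld tb PW s →
      ∀ w' w : C, IsWinner tb s P' w' → IsWinner tb s P w → w' = w ∨ P w' w) ∧
  ∃ s : C → ℕ, PossibleWorld tb PW s ∧
      ∃ w' w : C, IsWinner tb s P' w' ∧ IsWinner tb s P w ∧ P w' w

/-- The (closed) segment `[c, P, c']` of candidates between `c` and `c'`. -/
def seg {C : Type*} (P : C → C → Prop) (c c' : C) : Set C :=
  {d : C | (d = c ∨ P c d) ∧ (d = c' ∨ P d c')}

set_option linter.unusedSectionVars false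

section Helpers

variable {C : Type*} [Fintype C]

lemma pref_asymm {P : C → C → Prop} (h : IsPref P) {a b : C} (hab : P a b) : ¬ P b a :=
  fun hba => h.2.1 a (h.2.2 a b a hab hba)

lemma borda_pos (P : C → C → Prop) (c : C) : 1 ≤ borda P c := Nat.le_add_right 1 _

lemma borda_le {P : C → C → Prop} (h : IsPref P) (c : C) : borda P c ≤ Fintype.card C := by
  have hss : {c' : C | P c c'} ⊂ Set.univ :=
    ⟨Set.subset_univ _, fun hsub => h.2.1 c (hsub (Set.mem_univ c))⟩
  have h2 := Set.ncard_lt_ncard hss Set.finite_univ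
  rw [Set.ncard_univ, Nat.card_eq_fintype_card] at h2
  unfold borda
  omega

lemma borda_seg {P : C → C → Prop} (h : IsPref P) {x y : C} (hxy : P x y) :
    borda P x + 1 = borda P y + (seg P x y).ncard := by
  have hxy' : x ≠ y := fun he => h.2.1 x (he ▸ hxy)
  have hset : {c' : C | P x c'} = {c' : C | P y c'} ∪ (seg P x y \ {x}) := by
    ext d
    simp only [Set.mem_setOf_eq, Set.mem_union, Set.mem_diff, Set.mem_singleton_iff, seg]
    constructor
    · intro hd
      by_cases hyd : P y d
      · exact Or.inl hyd
      · refine Or.inr ⟨⟨Or.inr hd, ?_⟩, ?_⟩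
        · by_cases hdy : d = y
          · exact Or.inl hdy
          · rcases h.1 d y hdy with h1 | h1
            · exact Or.inr h1
            · exact absurd h1 hyd
        · rintro rfl; exact h.2.1 d hd
    · rintro (hd | ⟨⟨hd1, hd2⟩, hd3⟩)
      · exact h.2.2 x y d hxy hd
      · rcases hd1 with rfl | hd1
        · exact absurd rfl hd3
        · exact hd1
  have hdisj : Disjoint {c' : C | P y c'} (seg P x y \ {x}) := by
    rw [Set.disjoint_left]
    rintro d hd ⟨⟨hd1, hd2⟩, hd3⟩
    rcases hd2 with rfl | hd2
    · exact h.2.1 d hd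
    · exact h.2.1 d (h.2.2 d y d hd2 hd)
  have hxmem : x ∈ seg P x y := ⟨Or.inl rfl, Or.inr hxy⟩
  have hcard : ({c' : C | P x c'}).ncard
      = ({c' : C | P y c'}).ncard + (seg P x y \ {x}).ncard := by
    rw [hset, Set.ncard_union_eq hdisj (Set.toFinite _) (Set.toFinite _)]
  have h2 : (seg P x y \ {x}).ncard + 1 = (seg P x y).ncard :=
    Set.ncard_diff_singleton_add_one hxmem (Set.toFinite _)
  unfold borda
  omega

lemma two_le_seg {P : C → C → Prop} (h : IsPref P) {x y : C} (hxy : P x y) :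
    2 ≤ (seg P x y).ncard := by
  have hne : x ≠ y := fun he => h.2.1 x (he ▸ hxy)
  have hsub : ({x, y} : Set C) ⊆ seg P x y := by
    intro d hd
    simp only [Set.mem_insert_iff, Set.mem_singleton_iff] at hd
    rcases hd with rfl | rfl
    · exact ⟨Or.inl rfl, Or.inr hxy⟩
    · exact ⟨Or.inr hxy, Or.inl rfl⟩
  calc 2 = ({x, y} : Set C).ncard := (Set.ncard_pair hne).symm
    _ ≤ _ := Set.ncard_le_ncard hsub (Set.toFinite _)

open Classical in
noncomputable def sfun (x y : C) (Δ : ℕ) : C → ℕ :=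
  fun c => if c = x then Fintype.card C else if c = y then Fintype.card C + Δ else 0

lemma sfun_x (x y : C) (Δ : ℕ) : sfun x y Δ x = Fintype.card C := by simp [sfun]

lemma sfun_y {x y : C} (hxy : x ≠ y) (Δ : ℕ) : sfun x y Δ y = Fintype.card C + Δ := by
  simp [sfun, hxy.symm]

lemma sfun_other {x y c : C} (hx : c ≠ x) (hy : c ≠ y) (Δ : ℕ) : sfun x y Δ c = 0 := by
  simp [sfun, hx, hy]

end Helpers

section Helpers2
variable {C : Type*} [Fintype C]

lemma sfun_pw (tb : C → C → Prop) {l : ℕ} (pw : Fin l → C)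
    (a b : Fin l) (Δ : ℕ) (hxy : pw a ≠ pw b) :
    PossibleWorld tb (Set.range pw) (sfun (pw a) (pw b) Δ) := by
  intro R hR c hc
  by_contra hcr
  have hca : c ≠ pw a := fun he => hcr (he ▸ ⟨a, rfl⟩)
  have hcb : c ≠ pw b := fun he => hcr (he ▸ ⟨b, rfl⟩)
  have h1 := hc (pw a) (Ne.symm hca)
  rw [sfun_x, sfun_other hca hcb] at h1
  have hb1 := borda_pos R (pw a)
  have hb2 := borda_le hR c
  rcases h1 with h1 | ⟨h1, _⟩ <;> omega

lemma iswin_x (tb : C → C → Prop) {Q : C → C → Prop} (hQ : IsPref Q)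
    {x y : C} (hxy : x ≠ y) {Δ : ℕ}
    (hbeat : Fintype.card C + Δ + borda Q y < Fintype.card C + borda Q x ∨
      (Fintype.card C + Δ + borda Q y = Fintype.card C + borda Q x ∧ tb x y)) :
    IsWinner tb (sfun x y Δ) Q x := by
  intro c hc
  by_cases hcy : c = y
  · subst hcy
    rw [sfun_x, sfun_y hxy]
    exact hbeat
  · rw [sfun_x, sfun_other hc hcy]
    left
    have hb1 := borda_le hQ c
    have hb2 := borda_pos Q x
    omega

lemma iswin_y (tb : C → C → Prop) {Q : C → C → Prop} (hQ : IsPref Q)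
    {x y : C} (hxy : x ≠ y) {Δ : ℕ}
    (hbeat : Fintype.card C + borda Q x < Fintype.card C + Δ + borda Q y ∨
      (Fintype.card C + borda Q x = Fintype.card C + Δ + borda Q y ∧ tb y x)) :
    IsWinner tb (sfun x y Δ) Q y := by
  intro c hc
  by_cases hcx : c = x
  · subst hcx
    rw [sfun_x, sfun_y hxy]
    exact hbeat
  · rw [sfun_y hxy, sfun_other hcx hc]
    left
    have hb1 := borda_le hQ c
    have hb2 := borda_pos Q y
    omega

lemma tele_le {l : ℕ} (pw : Fin l → C) (g g' : C → ℕ)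
    (hstep : ∀ i : ℕ, ∀ h : i + 1 < l,
      g (pw ⟨i, Nat.lt_of_succ_lt h⟩) + g' (pw ⟨i + 1, h⟩) ≤ g (pw ⟨i + 1, h⟩) + g' (pw ⟨i, Nat.lt_of_succ_lt h⟩)) :
    ∀ d a : ℕ, ∀ h : a + d < l,
      g (pw ⟨a, by omega⟩) + g' (pw ⟨a + d, h⟩) ≤ g (pw ⟨a + d, h⟩) + g' (pw ⟨a, by omega⟩) := by
  intro d
  induction d with
  | zero =>
    intro a h
    have hpe : (⟨a + 0, h⟩ : Fin l) = ⟨a, by omega⟩ := rfl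
    rw [hpe]
  | succ d ih =>
    intro a h
    have h2 : a + d + 1 < l := by omega
    have hih := ih a (by omega)
    have hst := hstep (a + d) h2
    have hpe : (⟨a + (d + 1), h⟩ : Fin l) = ⟨a + d + 1, h2⟩ := rfl
    rw [hpe]
    omega

lemma tele_eq {l : ℕ} (pw : Fin l → C) (g g' : C → ℕ)
    (hstep : ∀ i : ℕ, ∀ h : i + 1 < l,
      g (pw ⟨i, Nat.lt_of_succ_lt h⟩) + g' (pw ⟨i + 1, h⟩) = g (pw ⟨i + 1, h⟩) + g' (pw ⟨i, Nat.lt_of_succ_lt h⟩)) :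
    ∀ d a : ℕ, ∀ h : a + d < l,
      g (pw ⟨a, by omega⟩) + g' (pw ⟨a + d, h⟩) = g (pw ⟨a + d, h⟩) + g' (pw ⟨a, by omega⟩) := by
  intro d
  induction d with
  | zero =>
    intro a h
    have hpe : (⟨a + 0, h⟩ : Fin l) = ⟨a, by omega⟩ := rfl
    rw [hpe]
  | succ d ih =>
    intro a h
    have h2 : a + d + 1 < l := by omega
    have hih := ih a (by omega)
    have hst := hstep (a + d) h2
    have hpe : (⟨a + (d + 1), h⟩ : Fin l) = ⟨a + d + 1, h2⟩ := rfl
    rw [hpe]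
    omega

end Helpers2


theorem statement0 {C : Type*} [Fintype C]
    (tb : C → C → Prop) (htb : IsPref tb)
    (l : ℕ) (hl : 0 < l) (pw : Fin l → C) (hinj : Function.Injective pw)
    (P P' : C → C → Prop) (hP : IsPref P) (hP' : IsPref P')
    (horder : ∀ a b : Fin l, P (pw a) (pw b) ↔ a < b) :
    LocDom tb (Set.range pw) P' P ↔
      ((∀ a : ℕ, ∀ h : a + 1 < l, P' (pw ⟨a, by omega⟩) (pw ⟨a + 1, h⟩)) ∧
       (∀ a : ℕ, ∀ h : a + 1 < l,
          (seg P (pw ⟨a, by omega⟩) (pw ⟨a + 1, h⟩)).ncard ≤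
            (seg P' (pw ⟨a, by omega⟩) (pw ⟨a + 1, h⟩)).ncard) ∧
       (∃ a : ℕ, ∃ h : a + 1 < l,
          (seg P (pw ⟨a, by omega⟩) (pw ⟨a + 1, h⟩)).ncard <
            (seg P' (pw ⟨a, by omega⟩) (pw ⟨a + 1, h⟩)).ncard)) := by
  constructor
  · rintro ⟨hweak, hstrict⟩
    have part1 : ∀ a : ℕ, ∀ h : a + 1 < l, P' (pw ⟨a, by omega⟩) (pw ⟨a + 1, h⟩) := by
      intro a h
      by_contra hcon
      have ha : a < l := by omega
      have hne : pw ⟨a, ha⟩ ≠ pw ⟨a + 1, h⟩ := by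
        intro he
        have := hinj he
        simp only [Fin.mk.injEq] at this
        omega
      have hPxy : P (pw ⟨a, ha⟩) (pw ⟨a + 1, h⟩) :=
        (horder _ _).mpr (by simp [Fin.mk_lt_mk])
      have hP'yx : P' (pw ⟨a + 1, h⟩) (pw ⟨a, ha⟩) := by
        rcases hP'.1 _ _ hne.symm with h1 | h1
        · exact h1
        · exact absurd h1 hcon
      have hsegP := borda_seg hP hPxy
      have hsegP' := borda_seg hP' hP'yx
      have h2P := two_le_seg hP hPxy
      have h2P' := two_le_seg hP' hP'yx
      have hPW := sfun_pw tb pw ⟨a, ha⟩ ⟨a + 1, h⟩ 0 hne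
      have hwx : IsWinner tb (sfun (pw ⟨a, ha⟩) (pw ⟨a + 1, h⟩) 0) P (pw ⟨a, ha⟩) :=
        iswin_x tb hP hne (Or.inl (by omega))
      have hwy : IsWinner tb (sfun (pw ⟨a, ha⟩) (pw ⟨a + 1, h⟩) 0) P' (pw ⟨a + 1, h⟩) :=
        iswin_y tb hP' hne (Or.inl (by omega))
      rcases hweak _ hPW _ _ hwy hwx with h1 | h1
      · exact hne h1.symm
      · exact pref_asymm hP hPxy h1
    have part2 : ∀ a : ℕ, ∀ h : a + 1 < l,
        (seg P (pw ⟨a, by omega⟩) (pw ⟨a + 1, h⟩)).ncard ≤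
          (seg P' (pw ⟨a, by omega⟩) (pw ⟨a + 1, h⟩)).ncard := by
      intro a h
      by_contra hcon
      push_neg at hcon
      have ha : a < l := by omega
      have hne : pw ⟨a, ha⟩ ≠ pw ⟨a + 1, h⟩ := by
        intro he
        have := hinj he
        simp only [Fin.mk.injEq] at this
        omega
      have hPxy : P (pw ⟨a, ha⟩) (pw ⟨a + 1, h⟩) :=
        (horder _ _).mpr (by simp [Fin.mk_lt_mk])
      have hP'xy : P' (pw ⟨a, ha⟩) (pw ⟨a + 1, h⟩) := part1 a h
      have hsegP := borda_seg hP hPxy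
      have hsegP' := borda_seg hP' hP'xy
      have h2P := two_le_seg hP hPxy
      have h2P' := two_le_seg hP' hP'xy
      have hcon' : (seg P' (pw ⟨a, ha⟩) (pw ⟨a + 1, h⟩)).ncard
          < (seg P (pw ⟨a, ha⟩) (pw ⟨a + 1, h⟩)).ncard := hcon
      rcases htb.1 _ _ hne with htbxy | htbyx
      · -- tb x y : Δ = segP - 1
        set Δ := (seg P (pw ⟨a, ha⟩) (pw ⟨a + 1, h⟩)).ncard - 1 with hΔ
        have hPW := sfun_pw tb pw ⟨a, ha⟩ ⟨a + 1, h⟩ Δ hne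
        have hwx : IsWinner tb (sfun (pw ⟨a, ha⟩) (pw ⟨a + 1, h⟩) Δ) P (pw ⟨a, ha⟩) :=
          iswin_x tb hP hne (Or.inr ⟨by omega, htbxy⟩)
        have hwy : IsWinner tb (sfun (pw ⟨a, ha⟩) (pw ⟨a + 1, h⟩) Δ) P' (pw ⟨a + 1, h⟩) :=
          iswin_y tb hP' hne (Or.inl (by omega))
        rcases hweak _ hPW _ _ hwy hwx with h1 | h1
        · exact hne h1.symm
        · exact pref_asymm hP hPxy h1
      · -- tb y x : Δ = segP' - 1
        set Δ := (seg P' (pw ⟨a, ha⟩) (pw ⟨a + 1, h⟩)).ncard - 1 with hΔ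
        have hPW := sfun_pw tb pw ⟨a, ha⟩ ⟨a + 1, h⟩ Δ hne
        have hwx : IsWinner tb (sfun (pw ⟨a, ha⟩) (pw ⟨a + 1, h⟩) Δ) P (pw ⟨a, ha⟩) :=
          iswin_x tb hP hne (Or.inl (by omega))
        have hwy : IsWinner tb (sfun (pw ⟨a, ha⟩) (pw ⟨a + 1, h⟩) Δ) P' (pw ⟨a + 1, h⟩) :=
          iswin_y tb hP' hne (Or.inr ⟨by omega, htbyx⟩)
        rcases hweak _ hPW _ _ hwy hwx with h1 | h1
        · exact hne h1.symm
        · exact pref_asymm hP hPxy h1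
    refine ⟨part1, part2, ?_⟩
    by_contra hcon
    push_neg at hcon
    have hstep : ∀ i : ℕ, ∀ h : i + 1 < l,
        borda P (pw ⟨i, by omega⟩) + borda P' (pw ⟨i + 1, h⟩)
          = borda P (pw ⟨i + 1, h⟩) + borda P' (pw ⟨i, by omega⟩) := by
      intro i h
      have hi : i < l := by omega
      have hPxy : P (pw ⟨i, hi⟩) (pw ⟨i + 1, h⟩) :=
        (horder _ _).mpr (by simp [Fin.mk_lt_mk])
      have hP'xy : P' (pw ⟨i, hi⟩) (pw ⟨i + 1, h⟩) := part1 i h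
      have e1 := borda_seg hP hPxy
      have e2 := borda_seg hP' hP'xy
      have e3 := part2 i h
      have e4 := hcon i h
      omega
    obtain ⟨s, hPW, w', w, hw', hw, hPw⟩ := hstrict
    obtain ⟨a', hw'eq⟩ := hPW P' hP' w' hw'
    obtain ⟨a, hweq⟩ := hPW P hP w hw
    subst hw'eq hweq
    have hlt : a' < a := (horder a' a).mp hPw
    have hne : pw a' ≠ pw a := fun he => absurd (hinj he) (Fin.ne_of_lt hlt)
    have hd : a'.val + (a.val - a'.val) < l := by omega
    have htel := tele_eq pw (borda P) (borda P') hstep (a.val - a'.val) a'.val hd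
    have e2 : (⟨a'.val + (a.val - a'.val), hd⟩ : Fin l) = a := by
      ext
      simp only []
      omega
    rw [e2] at htel
    simp only [Fin.eta] at htel
    have h1 := hw (pw a') hne
    have h2 := hw' (pw a) hne.symm
    rcases h1 with h1 | ⟨h1e, h1t⟩ <;> rcases h2 with h2 | ⟨h2e, h2t⟩
    · omega
    · omega
    · omega
    · exact pref_asymm htb h1t h2t
  · rintro ⟨h1, h2, a0, h0, h3⟩
    have hstep : ∀ i : ℕ, ∀ h : i + 1 < l,
        borda P (pw ⟨i, by omega⟩) + borda P' (pw ⟨i + 1, h⟩)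
          ≤ borda P (pw ⟨i + 1, h⟩) + borda P' (pw ⟨i, by omega⟩) := by
      intro i h
      have hi : i < l := by omega
      have hPxy : P (pw ⟨i, hi⟩) (pw ⟨i + 1, h⟩) :=
        (horder _ _).mpr (by simp [Fin.mk_lt_mk])
      have hP'xy : P' (pw ⟨i, hi⟩) (pw ⟨i + 1, h⟩) := h1 i h
      have e1 := borda_seg hP hPxy
      have e2 := borda_seg hP' hP'xy
      have e3 := h2 i h
      omega
    constructor
    · intro s hPW w' w hw' hw
      by_cases hww : w' = w
      · exact Or.inl hww
      obtain ⟨a', rfl⟩ := hPW P' hP' w' hw'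
      obtain ⟨a, rfl⟩ := hPW P hP w hw
      have hne : a' ≠ a := fun he => hww (congrArg pw he)
      rcases lt_or_gt_of_ne hne with hlt | hgt
      · exact Or.inr ((horder a' a).mpr hlt)
      exfalso
      have hd : a.val + (a'.val - a.val) < l := by
        have : a.val < a'.val := hgt
        omega
      have htel := tele_le pw (borda P) (borda P') hstep (a'.val - a.val) a.val hd
      have e2 : (⟨a.val + (a'.val - a.val), hd⟩ : Fin l) = a' := by
        ext
        simp only []
        have : a.val < a'.val := hgt
        omega
      rw [e2] at htel
      simp only [Fin.eta] at htel
      have hb1 := hw (pw a') hww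
      have hb2 := hw' (pw a) (fun he => hww he.symm)
      rcases hb1 with hb1 | ⟨hb1e, hb1t⟩ <;> rcases hb2 with hb2 | ⟨hb2e, hb2t⟩
      · omega
      · omega
      · omega
      · exact pref_asymm htb hb1t hb2t
    · have ha0 : a0 < l := by omega
      have hne : pw ⟨a0, ha0⟩ ≠ pw ⟨a0 + 1, h0⟩ := by
        intro he
        have := hinj he
        simp only [Fin.mk.injEq] at this
        omega
      have hPxy : P (pw ⟨a0, ha0⟩) (pw ⟨a0 + 1, h0⟩) :=
        (horder _ _).mpr (by simp [Fin.mk_lt_mk])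
      have hP'xy : P' (pw ⟨a0, ha0⟩) (pw ⟨a0 + 1, h0⟩) := h1 a0 h0
      have e1 := borda_seg hP hPxy
      have e2 := borda_seg hP' hP'xy
      have h2P := two_le_seg hP hPxy
      have h2P' := two_le_seg hP' hP'xy
      have h3' : (seg P (pw ⟨a0, ha0⟩) (pw ⟨a0 + 1, h0⟩)).ncard
          < (seg P' (pw ⟨a0, ha0⟩) (pw ⟨a0 + 1, h0⟩)).ncard := h3
      rcases htb.1 _ _ hne with htbxy | htbyx
      · refine ⟨sfun (pw ⟨a0, ha0⟩) (pw ⟨a0 + 1, h0⟩)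
            ((seg P' (pw ⟨a0, ha0⟩) (pw ⟨a0 + 1, h0⟩)).ncard - 1),
          sfun_pw tb pw _ _ _ hne, pw ⟨a0, ha0⟩, pw ⟨a0 + 1, h0⟩, ?_, ?_, hPxy⟩
        · exact iswin_x tb hP' hne (Or.inr ⟨by omega, htbxy⟩)
        · exact iswin_y tb hP hne (Or.inl (by omega))
      · refine ⟨sfun (pw ⟨a0, ha0⟩) (pw ⟨a0 + 1, h0⟩)
            ((seg P (pw ⟨a0, ha0⟩) (pw ⟨a0 + 1, h0⟩)).ncard - 1),
          sfun_pw tb pw _ _ _ hne, pw ⟨a0, ha0⟩, pw ⟨a0 + 1, h0⟩, ?_, ?_, hPxy⟩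
        · exact iswin_x tb hP' hne (Or.inl (by omega))
        · exact iswin_y tb hP hne (Or.inr ⟨by omega, htbyx⟩)
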